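/- Let μ be a locally finite positive Borel measure on ℝ^n. Then for every locally finite positive Borel measure f and every x ∈ ℝ^n: M^null f(x) ≤ M f(x) ≤ 2^{n+3} M^null f(x), where M^null is the maximal function restricted to cubes belonging to shifted dyadic grids all of whose cubes have μ-null boundary. In particular M^null f and M f are pointwise comparable with constants depending only on n. -/

import Mathlib

open MeasureTheory Set Filter
open scoped ENNReal NNReal

noncomputable section

/-- An axis-parallel half-open cube in `ℝⁿ`, given by its lower corner and (positive)
side length. -/
structure Cube (n : ℕ) where
  corner : Fin n → ℝ
  side : ℝ
  side_pos : 0 < side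

namespace Cube

variable {n : ℕ}

/-- The underlying (half-open) set of the cube. -/
def toSet (Q : Cube n) : Set (Fin n → ℝ) :=
  {x | ∀ i, Q.corner i ≤ x i ∧ x i < Q.corner i + Q.side}

/-- The concentric dilate `ΓQ` of the cube `Q` (same center, side length `Γ·ℓ(Q)`),
as a set. -/
def dilate (Q : Cube n) (Γ : ℝ) : Set (Fin n → ℝ) :=
  {x | ∀ i, Q.corner i - (Γ - 1) * Q.side / 2 ≤ x i ∧
       x i < Q.corner i + Q.side + (Γ - 1) * Q.side / 2}

/-- Membership in `𝒫ⁿ`: the side length is an integral power of `2`. -/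
def memP (Q : Cube n) : Prop := ∃ ℓ : ℤ, Q.side = (2:ℝ) ^ ℓ

end Cube

/-- The translation applied at scale `2^ℓ` in the random dyadic grid determined by `β`:
`Σ_{j : 2^{-j} < 2^ℓ} 2^{-j} β_j`. -/
def gridShift {n : ℕ} (β : ℤ → Fin n → Bool) (ℓ : ℤ) (i : Fin n) : ℝ :=
  ∑' j : ℤ, if (2:ℝ) ^ (-j) < (2:ℝ) ^ ℓ ∧ β j i = true then (2:ℝ) ^ (-j) else 0

/-- Membership in the shifted dyadic grid `𝒟^β`. -/
def memGrid {n : ℕ} (β : ℤ → Fin n → Bool) (Q : Cube n) : Prop :=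
  ∃ (ℓ : ℤ) (k : Fin n → ℤ), Q.side = (2:ℝ) ^ ℓ ∧
    ∀ i, Q.corner i = (2:ℝ) ^ ℓ * (k i : ℝ) + gridShift β ℓ i

/-- The Hardy–Littlewood maximal function of a measure, over cubes in `𝒫ⁿ`. -/
def maximal {n : ℕ} (μ : Measure (Fin n → ℝ)) (x : Fin n → ℝ) : ℝ≥0∞ :=
  ⨆ (Q : Cube n) (_ : Q.memP) (_ : x ∈ Q.toSet), μ Q.toSet / volume Q.toSet

/-- The dyadic maximal function relative to the grid `𝒟^β`. -/
def dyadicMaximal {n : ℕ} (β : ℤ → Fin n → Bool) (μ : Measure (Fin n → ℝ))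
    (x : Fin n → ℝ) : ℝ≥0∞ :=
  ⨆ (Q : Cube n) (_ : memGrid β Q) (_ : x ∈ Q.toSet), μ Q.toSet / volume Q.toSet

/-- The two-weight Muckenhoupt constant `A₂(σ,ω)`. -/
def A2 {n : ℕ} (σ ω : Measure (Fin n → ℝ)) : ℝ≥0∞ :=
  ⨆ (Q : Cube n) (_ : Q.memP), (σ Q.toSet / volume Q.toSet) * (ω Q.toSet / volume Q.toSet)

/-- The operator norm `𝔑_M(σ,ω)` of the maximal function from `L²(σ)` to `L²(ω)`:
the least `N` with `∫ M(fσ)² dω ≤ N² ∫ f² dσ` for all (nonnegative) `f`. -/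
def opNorm {n : ℕ} (σ ω : Measure (Fin n → ℝ)) : ℝ≥0∞ :=
  sInf {N : ℝ≥0∞ | ∀ f : (Fin n → ℝ) → ℝ≥0∞, Measurable f →
    ∫⁻ x, (maximal (σ.withDensity f) x) ^ 2 ∂ω ≤ N ^ 2 * ∫⁻ x, (f x) ^ 2 ∂σ}

/-- The grid `𝒟^β` has `μ`-null boundaries: every cube of the grid has `μ`-null
topological boundary. -/
def nullBoundaryGrid {n : ℕ} (μ : Measure (Fin n → ℝ)) (β : ℤ → Fin n → Bool) : Prop :=
  ∀ Q : Cube n, memGrid β Q → μ (frontier Q.toSet) = 0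

/-- The maximal function `M^null` restricted to cubes belonging to shifted dyadic grids
all of whose cubes have `μ`-null boundary. -/
def maximalNull {n : ℕ} (μ f : Measure (Fin n → ℝ)) (x : Fin n → ℝ) : ℝ≥0∞ :=
  ⨆ (Q : Cube n) (_ : ∃ β : ℤ → Fin n → Bool, nullBoundaryGrid μ β ∧ memGrid β Q)
    (_ : x ∈ Q.toSet), f Q.toSet / volume Q.toSet

/-!
Given `Q ∈ 𝒫ⁿ` with corner `c` and side `2^ℓ`, only countably many hyperplanes `{x_i = a}` carry
positive `μ`-mass, so we can pick `s` with `c_i - 2^ℓ < s_i < c_i` such that no hyperplane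
`{x_i = s_i + q}`, `q ∈ ℚ`, does. Taking for `β` the binary digits of `s` makes `𝒟^β` the standard
grid translated by `s` (at scale `2^m` the shift is `s` modulo `2^m`), so all faces of cubes of
`𝒟^β` lie in such hyperplanes and `β ∈ Ω^null(μ)`. The cube with corner `s` and side `2^{ℓ+1}`
belongs to `𝒟^β` and contains `Q`, so the average of `f` over `Q` is at most `2ⁿ` times an
average entering `M^null f`. The other inequality holds because `𝒟^β ⊆ 𝒫ⁿ`.
-/

open Topology

namespace Cube

variable {n : ℕ}

lemma toSet_eq_pi (Q : Cube n) :
    Q.toSet = univ.pi fun i => Ico (Q.corner i) (Q.corner i + Q.side) := by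
  ext x
  simp [toSet]

lemma volume_toSet (Q : Cube n) : volume Q.toSet = ENNReal.ofReal (Q.side ^ n) := by
  rw [toSet_eq_pi, volume_pi_pi]
  simp only [Real.volume_Ico, add_sub_cancel_left, Finset.prod_const, Finset.card_univ,
    Fintype.card_fin, ENNReal.ofReal_pow Q.side_pos.le]

lemma frontier_toSet_subset (Q : Cube n) :
    frontier Q.toSet ⊆ ⋃ i, {x | x i = Q.corner i} ∪ {x | x i = Q.corner i + Q.side} := by
  have hlt : ∀ i, Q.corner i < Q.corner i + Q.side := fun i => lt_add_of_pos_right _ Q.side_pos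
  rintro x ⟨hcl, hint⟩
  rw [toSet_eq_pi, closure_pi_set] at hcl
  rw [toSet_eq_pi, interior_pi_set finite_univ] at hint
  simp only [closure_Ico (hlt _).ne, interior_Ico, mem_univ_pi, not_forall] at hcl hint
  obtain ⟨i, hi⟩ := hint
  have : x i ∈ Icc (Q.corner i) (Q.corner i + Q.side) \ Ioo (Q.corner i) (Q.corner i + Q.side) :=
    ⟨hcl i, hi⟩
  rw [Icc_sdiff_Ioo_same (hlt i).le] at this
  exact mem_iUnion.2 ⟨i, this⟩

lemma measure_div_volume_le_of_subset (f : Measure (Fin n → ℝ)) {Q R : Cube n}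
    (hQR : Q.toSet ⊆ R.toSet) (hside : R.side = 2 * Q.side) :
    f Q.toSet / volume Q.toSet ≤ 2 ^ n * (f R.toSet / volume R.toSet) := by
  have hvol : volume R.toSet = 2 ^ n * volume Q.toSet := by
    rw [volume_toSet, volume_toSet, hside, mul_pow, ENNReal.ofReal_mul (by positivity),
      ENNReal.ofReal_pow zero_le_two, ENNReal.ofReal_ofNat]
  calc f Q.toSet / volume Q.toSet ≤ f R.toSet / volume Q.toSet := by gcongr
    _ = 2 ^ n * f R.toSet / (2 ^ n * volume Q.toSet) :=
      (ENNReal.mul_div_mul_left _ _ (by positivity) (ENNReal.pow_ne_top (by norm_num))).symm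
    _ = 2 ^ n * (f R.toSet / volume R.toSet) := by rw [mul_div_assoc, hvol]

end Cube

lemma floor_two_mul_eq_or (x : ℝ) :
    ⌊2 * x⌋ = 2 * ⌊x⌋ ∨ ⌊2 * x⌋ = 2 * ⌊x⌋ + 1 := by
  have h1 := Int.floor_le x
  have h2 := Int.lt_floor_add_one x
  have h3 : 2 * ⌊x⌋ ≤ ⌊2 * x⌋ := Int.le_floor.2 (by push_cast; linarith)
  have h4 : ⌊2 * x⌋ < 2 * ⌊x⌋ + 2 := Int.floor_lt.2 (by push_cast; linarith)
  omega

theorem hasSum_sub_succ_of_antitone {H : ℕ → ℝ} (hH : Antitone H)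
    (hlim : Tendsto H atTop (𝓝 0)) : HasSum (fun k => H k - H (k + 1)) (H 0) := by
  rw [hasSum_iff_tendsto_nat_of_nonneg (fun k => sub_nonneg.2 (hH k.le_succ))]
  simp only [Finset.sum_range_sub']
  simpa using tendsto_const_nhds.sub hlim

/-- The coefficient of `2^{-j}` in the binary expansion of `t`. -/
def binaryDigit (t : ℝ) (j : ℤ) : Bool := decide (⌊t * 2 ^ j⌋ % 2 = 1)

/-- `t` modulo `2^{-j}`, i.e. the sum of the binary digits of `t` at scales below `2^{-j}`. -/
def binaryTail (t : ℝ) (j : ℤ) : ℝ := 2 ^ (-j) * Int.fract (t * 2 ^ j)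

lemma binaryTail_nonneg (t : ℝ) (j : ℤ) : 0 ≤ binaryTail t j :=
  mul_nonneg (zpow_nonneg zero_le_two _) (Int.fract_nonneg _)

lemma binaryTail_le (t : ℝ) (j : ℤ) : binaryTail t j ≤ 2 ^ (-j) :=
  mul_le_of_le_one_right (zpow_nonneg zero_le_two _) (Int.fract_lt_one _).le

lemma binaryTail_sub_binaryTail (t : ℝ) (j : ℤ) :
    binaryTail t (j - 1) - binaryTail t j =
      if binaryDigit t j then (2:ℝ) ^ (-j) else 0 := by
  have hj : t * (2:ℝ) ^ j = 2 * (t * 2 ^ (j - 1)) := by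
    rw [zpow_sub_one₀ two_ne_zero]; ring
  have hscale : (2:ℝ) ^ (-(j - 1)) = 2 * 2 ^ (-j) := by
    rw [neg_sub, sub_eq_add_neg, add_comm, zpow_add_one₀ two_ne_zero, mul_comm]
  rw [binaryTail, binaryTail, binaryDigit, hscale, Int.fract, Int.fract, hj]
  rcases floor_two_mul_eq_or (t * 2 ^ (j - 1)) with h | h <;> rw [h]
  · rw [if_neg (by simp)]; push_cast; ring
  · rw [if_pos (by simp)]; push_cast; ring

lemma tendsto_binaryTail_atTop (t : ℝ) (m : ℤ) :
    Tendsto (fun k : ℕ => binaryTail t (k - m)) atTop (𝓝 0) := by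
  have hbound : ∀ k : ℕ, (2:ℝ) ^ (-((k:ℤ) - m)) = 2 ^ m * (2⁻¹) ^ k := fun k => by
    rw [neg_sub, zpow_sub₀ two_ne_zero, zpow_natCast, div_eq_mul_inv, inv_pow]
  refine squeeze_zero (fun k => binaryTail_nonneg t _) (fun k => binaryTail_le t _) ?_
  simp only [hbound]
  simpa using (tendsto_pow_atTop_nhds_zero_of_lt_one (r := (2:ℝ)⁻¹) (by norm_num)
    (by norm_num)).const_mul ((2:ℝ) ^ m)

lemma hasSum_binaryDigit (t : ℝ) (m : ℤ) :
    HasSum (fun j : ℤ =>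
        if (2:ℝ) ^ (-j) < 2 ^ m ∧ binaryDigit t j = true then (2:ℝ) ^ (-j) else 0)
      (binaryTail t (-m)) := by
  set F : ℤ → ℝ := fun j =>
    if (2:ℝ) ^ (-j) < 2 ^ m ∧ binaryDigit t j = true then (2:ℝ) ^ (-j) else 0
  have hscale : ∀ j : ℤ, (2:ℝ) ^ (-j) < 2 ^ m ↔ 1 - m ≤ j := fun j => by
    rw [zpow_lt_zpow_iff_right₀ one_lt_two]; omega
  set e : ℕ → ℤ := fun k => k + (1 - m)
  have he : Function.Injective e := fun a b hab => by simpa [e] using hab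
  have hF : ∀ j ∉ range e, F j = 0 := fun j hj => by
    refine if_neg fun h => hj ⟨(j - (1 - m)).toNat, ?_⟩
    have := (hscale j).1 h.1
    simp only [e]; omega
  have hFe : ∀ k : ℕ, F (e k) = binaryTail t (k - m) - binaryTail t ((k + 1 : ℕ) - m) :=
    fun k => by
    have h1 : (k : ℤ) - m = e k - 1 := by simp only [e]; ring
    have h2 : ((k + 1 : ℕ) : ℤ) - m = e k := by simp only [e]; push_cast; ring
    rw [h1, h2, binaryTail_sub_binaryTail]
    simp only [F, (hscale (e k)).2 (by simp [e]), true_and]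
  have hanti : Antitone fun k : ℕ => binaryTail t (k - m) := by
    refine antitone_nat_of_succ_le fun k => sub_nonneg.1 ?_
    rw [← hFe]
    exact ite_nonneg (zpow_nonneg zero_le_two _) le_rfl
  rw [← he.hasSum_iff hF, show (F ∘ e) = _ from funext hFe]
  simpa using hasSum_sub_succ_of_antitone hanti (tendsto_binaryTail_atTop t m)

def binaryGrid {n : ℕ} (t : Fin n → ℝ) : ℤ → Fin n → Bool :=
  fun j i => binaryDigit (t i) j

lemma gridShift_binaryGrid {n : ℕ} (t : Fin n → ℝ) (m : ℤ) (i : Fin n) :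
    gridShift (binaryGrid t) m i = binaryTail (t i) (-m) :=
  (hasSum_binaryDigit (t i) m).tsum_eq

lemma memGrid_binaryGrid_corner {n : ℕ} (R : Cube n) (hR : R.memP) :
    memGrid (binaryGrid R.corner) R := by
  obtain ⟨ℓ, hℓ⟩ := hR
  refine ⟨ℓ, fun i => ⌊R.corner i * 2 ^ (-ℓ)⌋, hℓ, fun i => ?_⟩
  rw [gridShift_binaryGrid, binaryTail, neg_neg, ← mul_add, Int.floor_add_fract, mul_left_comm,
    ← zpow_add₀ two_ne_zero, add_neg_cancel, zpow_zero, mul_one]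

lemma exists_rat_of_memGrid_binaryGrid {n : ℕ} {t : Fin n → ℝ} {Q : Cube n}
    (hQ : memGrid (binaryGrid t) Q) :
    (∃ q : ℚ, Q.side = q) ∧ ∀ i, ∃ q : ℚ, Q.corner i = t i + q := by
  obtain ⟨m, k, hside, hcorner⟩ := hQ
  refine ⟨⟨2 ^ m, by rw [hside]; push_cast; rfl⟩,
    fun i => ⟨2 ^ m * (k i - ⌊t i * 2 ^ (-m)⌋), ?_⟩⟩
  rw [hcorner, gridShift_binaryGrid, binaryTail, neg_neg, Int.fract]
  push_cast
  rw [mul_sub, mul_sub, mul_left_comm, ← zpow_add₀ two_ne_zero, add_neg_cancel, zpow_zero]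
  ring

lemma nullBoundaryGrid_binaryGrid {n : ℕ} {μ : Measure (Fin n → ℝ)} {t : Fin n → ℝ}
    (h : ∀ i (q : ℚ), μ {y | y i = t i + q} = 0) : nullBoundaryGrid μ (binaryGrid t) := by
  intro Q hQ
  obtain ⟨⟨a, hside⟩, hcorner⟩ := exists_rat_of_memGrid_binaryGrid hQ
  refine measure_mono_null Q.frontier_toSet_subset (measure_iUnion_null fun i => ?_)
  obtain ⟨q, hq⟩ := hcorner i
  refine measure_union_null ?_ ?_
  · simpa [hq] using h i q
  · simpa [hq, hside, add_assoc] using h i (q + a)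

lemma exists_mem_Ioo_forall_add_rat_notMem {B : Set ℝ} (hB : B.Countable) {a b : ℝ}
    (hab : a < b) : ∃ s ∈ Ioo a b, ∀ q : ℚ, s + q ∉ B := by
  have hbad : (⋃ q : ℚ, (· - (q : ℝ)) '' B).Countable :=
    countable_iUnion fun q => hB.image _
  have hIoo : ¬ Ioo a b ⊆ ⋃ q : ℚ, (· - (q : ℝ)) '' B :=
    fun hsub => (Cardinal.Real.Ioo_countable_iff.1 (hbad.mono hsub)).not_gt hab
  obtain ⟨s, hs, hsB⟩ := not_subset.1 hIoo
  exact ⟨s, hs, fun q hq => hsB (mem_iUnion.2 ⟨q, s + q, hq, add_sub_cancel_right s q⟩)⟩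

lemma exists_forall_measure_hyperplane_eq_zero {n : ℕ} (μ : Measure (Fin n → ℝ)) [SFinite μ]
    (c : Fin n → ℝ) {r : ℝ} (hr : 0 < r) :
    ∃ s : Fin n → ℝ, (∀ i, s i ∈ Ioo (c i - r) (c i)) ∧
      ∀ i (q : ℚ), μ {y | y i = s i + q} = 0 := by
  have hatoms : ∀ i : Fin n, {a : ℝ | 0 < μ {y | y i = a}}.Countable := fun i =>
    Measure.countable_meas_level_set_pos (measurable_pi_apply i)
  choose s hs hnull using fun i =>
    exists_mem_Ioo_forall_add_rat_notMem (hatoms i) (sub_lt_self (c i) hr)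
  exact ⟨s, hs, fun i q => nonpos_iff_eq_zero.1 (not_lt.1 (hnull i q))⟩

lemma exists_nullBoundaryGrid_superset {n : ℕ} (μ : Measure (Fin n → ℝ)) [SFinite μ]
    {Q : Cube n} (hQ : Q.memP) :
    ∃ (β : ℤ → Fin n → Bool) (R : Cube n), nullBoundaryGrid μ β ∧ memGrid β R ∧
      Q.toSet ⊆ R.toSet ∧ R.side = 2 * Q.side := by
  obtain ⟨ℓ, hℓ⟩ := hQ
  obtain ⟨s, hs, hnull⟩ := exists_forall_measure_hyperplane_eq_zero μ Q.corner Q.side_pos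
  let R : Cube n := ⟨s, 2 * Q.side, by linarith [Q.side_pos]⟩
  have hR : R.memP := ⟨ℓ + 1, by simp [R, hℓ, zpow_add_one₀, mul_comm]⟩
  refine ⟨binaryGrid s, R, nullBoundaryGrid_binaryGrid hnull, memGrid_binaryGrid_corner R hR,
    fun y hy i => ?_, rfl⟩
  obtain ⟨hsi, hsi'⟩ := hs i
  obtain ⟨hy, hy'⟩ := hy i
  exact ⟨by simp only [R]; linarith, by simp only [R]; linarith⟩

lemma maximalNull_le_maximal {n : ℕ} (μ f : Measure (Fin n → ℝ)) (x : Fin n → ℝ) :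
    maximalNull μ f x ≤ maximal f x := by
  refine iSup₂_le fun Q hQ => iSup_le fun hx => ?_
  obtain ⟨β, -, ℓ, -, hside, -⟩ := hQ
  exact le_iSup₂_of_le Q ⟨ℓ, hside⟩ (le_iSup_of_le hx le_rfl)

lemma maximal_le_two_pow_mul_maximalNull {n : ℕ} (μ : Measure (Fin n → ℝ)) [SFinite μ]
    (f : Measure (Fin n → ℝ)) (x : Fin n → ℝ) :
    maximal f x ≤ 2 ^ n * maximalNull μ f x := by
  refine iSup₂_le fun Q hQ => iSup_le fun hx => ?_
  obtain ⟨β, R, hβ, hR, hQR, hside⟩ := exists_nullBoundaryGrid_superset μ hQ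
  calc f Q.toSet / volume Q.toSet ≤ 2 ^ n * (f R.toSet / volume R.toSet) :=
        Cube.measure_div_volume_le_of_subset f hQR hside
    _ ≤ 2 ^ n * maximalNull μ f x := by
        gcongr
        exact le_iSup₂_of_le R ⟨β, hβ, hR⟩ (le_iSup_of_le (hQR hx) le_rfl)

theorem maximalNull_equiv_maximal_general
    {n : ℕ} (μ f : Measure (Fin n → ℝ))
    (hμ : IsLocallyFiniteMeasure μ) (x : Fin n → ℝ) :
    maximalNull μ f x ≤ maximal f x ∧
      maximal f x ≤ 2 ^ (n + 3) * maximalNull μ f x :=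
  ⟨maximalNull_le_maximal μ f x, (maximal_le_two_pow_mul_maximalNull μ f x).trans <|
    by gcongr <;> norm_num⟩

/-- **Pointwise comparability of `M^null` and `M`.** For every locally finite positive
Borel measure `μ` on `ℝⁿ`, every locally finite positive Borel measure `f`, and every
`x ∈ ℝⁿ`: `M^null f(x) ≤ M f(x) ≤ 2^{n+3} M^null f(x)`. -/
theorem maximalNull_equiv_maximal
    {n : ℕ} (μ f : Measure (Fin n → ℝ))
    (hμ : IsLocallyFiniteMeasure μ) (hf : IsLocallyFiniteMeasure f) (x : Fin n → ℝ) :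
    maximalNull μ f x ≤ maximal f x ∧
      maximal f x ≤ 2 ^ (n + 3) * maximalNull μ f x :=
  maximalNull_equiv_maximal_general μ f hμ x
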